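/- Let x, y ∈ ℝ^d with x ≺ y and such that |x|↓ = |y|↓, i.e., the vectors of absolute values of x and y agree after rearranging in non-increasing order. Then x↓ = y↓. -/
import Mathlib


open Matrix Polynomial
open scoped ComplexOrder

/-- The vector `x` rearranged in non-increasing order. -/
noncomputable def sortDesc {d : ℕ} (x : Fin d → ℝ) : Fin d → ℝ :=
  fun i => x (Tuple.sort x i.rev)

/-- The vector `x` rearranged in non-decreasing order. -/
noncomputable def sortAsc {d : ℕ} (x : Fin d → ℝ) : Fin d → ℝ :=
  fun i => x (Tuple.sort x i)

/-- `x` is submajorized by `y`. -/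
noncomputable def Submajorizes {d : ℕ} (x y : Fin d → ℝ) : Prop :=
  ∀ k : Fin d, ∑ i ∈ Finset.Iic k, sortDesc x i ≤ ∑ i ∈ Finset.Iic k, sortDesc y i

/-- `x` is majorized by `y`. -/
noncomputable def Majorizes {d : ℕ} (x y : Fin d → ℝ) : Prop :=
  Submajorizes x y ∧ ∑ i, x i = ∑ i, y i

section Aux

variable {d : ℕ}

lemma sortDesc_antitone (x : Fin d → ℝ) : Antitone (sortDesc x) := by
  intro i j hij
  exact Tuple.monotone_sort x (Fin.rev_le_rev.mpr hij)

lemma sum_comp_sortDesc (x : Fin d → ℝ) (g : ℝ → ℝ) :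
    ∑ i, g (sortDesc x i) = ∑ i, g (x i) := by
  rw [← Equiv.sum_comp ((Fin.revPerm).trans (Tuple.sort x)) (fun i => g (x i))]
  rfl

lemma sum_Iic_le (x : Fin d → ℝ) (k : Fin d) (t : ℝ) :
    ∑ i ∈ Finset.Iic k, sortDesc x i ≤
      (Finset.Iic k).card * t + ∑ i, max (x i - t) 0 := by
  rw [← sum_comp_sortDesc x (fun s => max (s - t) 0)]
  have h1 : ∑ i ∈ Finset.Iic k, sortDesc x i ≤
      ∑ i ∈ Finset.Iic k, (t + max (sortDesc x i - t) 0) := by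
    apply Finset.sum_le_sum
    intro i _
    have := le_max_left (sortDesc x i - t) 0
    linarith
  have h2 : ∑ i ∈ Finset.Iic k, max (sortDesc x i - t) 0 ≤
      ∑ i, max (sortDesc x i - t) 0 :=
    Finset.sum_le_sum_of_subset_of_nonneg (Finset.subset_univ _)
      (fun i _ _ => le_max_right _ _)
  rw [Finset.sum_add_distrib, Finset.sum_const, nsmul_eq_mul] at h1
  linarith

lemma sum_Iic_eq (x : Fin d → ℝ) (k : Fin d) (t : ℝ)
    (h1 : ∀ i ≤ k, t ≤ sortDesc x i) (h2 : ∀ i, k < i → sortDesc x i ≤ t) :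
    ∑ i ∈ Finset.Iic k, sortDesc x i =
      (Finset.Iic k).card * t + ∑ i, max (x i - t) 0 := by
  rw [← sum_comp_sortDesc x (fun s => max (s - t) 0)]
  have e1 : ∑ i ∈ Finset.Iic k, max (sortDesc x i - t) 0 =
      ∑ i, max (sortDesc x i - t) 0 := by
    apply Finset.sum_subset (Finset.subset_univ _)
    intro i _ hi
    have hki : k < i := not_le.mp (fun hik => hi (Finset.mem_Iic.mpr hik))
    have := h2 i hki
    exact max_eq_right (by linarith)
  have e2 : ∑ i ∈ Finset.Iic k, max (sortDesc x i - t) 0 =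
      ∑ i ∈ Finset.Iic k, (sortDesc x i - t) := by
    apply Finset.sum_congr rfl
    intro i hi
    have := h1 i (Finset.mem_Iic.mp hi)
    exact max_eq_left (by linarith)
  rw [← e1, e2, Finset.sum_sub_distrib, Finset.sum_const, nsmul_eq_mul]
  ring

lemma F_le_F (x y : Fin d → ℝ) (hsub : Submajorizes x y) (t : ℝ) :
    ∑ i, max (x i - t) 0 ≤ ∑ i, max (y i - t) 0 := by
  by_cases hK : ∃ i, t < sortDesc x i
  · set S := Finset.univ.filter (fun i => t < sortDesc x i) with hS
    have hne : S.Nonempty := by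
      obtain ⟨i, hi⟩ := hK
      exact ⟨i, by simp [hS, hi]⟩
    set k := S.max' hne with hk
    have hkS : k ∈ S := S.max'_mem hne
    have hkt : t < sortDesc x k := by
      have := hkS
      simp [hS] at this
      exact this
    have e := sum_Iic_eq x k t
      (fun i hik => le_of_lt (lt_of_lt_of_le hkt (sortDesc_antitone x hik)))
      (fun i hki => by
        by_contra hcon
        push_neg at hcon
        have hiS : i ∈ S := by simp [hS, hcon]
        exact absurd (S.le_max' i hiS) (not_le.mpr hki))
    have l := sum_Iic_le y k t
    have := hsub k
    linarith
  · push_neg at hK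
    have e0 : ∑ i, max (x i - t) 0 = 0 := by
      rw [← sum_comp_sortDesc x (fun s => max (s - t) 0)]
      apply Finset.sum_eq_zero
      intro i _
      have := hK i
      exact max_eq_right (by linarith)
    rw [e0]
    exact Finset.sum_nonneg (fun i _ => le_max_right _ _)

lemma G_identity (x : Fin d → ℝ) (t : ℝ) :
    ∑ i, max (-x i - t) 0 = (∑ i, max (x i - (-t)) 0) - (∑ i, x i) - d * t := by
  have key : ∀ s : ℝ, max (-s - t) 0 = max (s - (-t)) 0 - s - t := by
    intro s
    rcases le_total (s + t) 0 with h | h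
    · rw [max_eq_left (by linarith), max_eq_right (by linarith)]
      ring
    · rw [max_eq_right (by linarith), max_eq_left (by linarith)]
      ring
  calc ∑ i, max (-x i - t) 0 = ∑ i, (max (x i - (-t)) 0 - x i - t) :=
        Finset.sum_congr rfl (fun i _ => key (x i))
    _ = (∑ i, max (x i - (-t)) 0) - (∑ i, x i) - d * t := by
        simp only [sub_sub]
        rw [Finset.sum_sub_distrib, Finset.sum_add_distrib, Finset.sum_const,
          Finset.card_univ, Fintype.card_fin, nsmul_eq_mul]
        try ring

lemma F_eq_F (x y : Fin d → ℝ) (h : Majorizes x y)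
    (habs : sortDesc (fun i => |x i|) = sortDesc (fun i => |y i|)) (t : ℝ) :
    ∑ i, max (x i - t) 0 = ∑ i, max (y i - t) 0 := by
  have habsSum : ∀ s : ℝ, ∑ i, max (|x i| - s) 0 = ∑ i, max (|y i| - s) 0 := by
    intro s
    rw [← sum_comp_sortDesc (fun i => |x i|) (fun u => max (u - s) 0), habs,
      sum_comp_sortDesc (fun i => |y i|) (fun u => max (u - s) 0)]
  have hF : ∀ s : ℝ, ∑ i, max (x i - s) 0 ≤ ∑ i, max (y i - s) 0 :=
    fun s => F_le_F x y h.1 s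
  have hG : ∀ s : ℝ, ∑ i, max (-x i - s) 0 ≤ ∑ i, max (-y i - s) 0 := by
    intro s
    rw [G_identity x s, G_identity y s, h.2]
    have := hF (-s)
    linarith
  have hsplit : ∀ s : ℝ, 0 ≤ s → ∀ u : ℝ,
      max (u - s) 0 + max (-u - s) 0 = max (|u| - s) 0 := by
    intro s hs u
    rcases le_total u 0 with hu | hu
    · rw [abs_of_nonpos hu, max_eq_right (a := u - s) (by linarith)]
      try ring
    · rw [abs_of_nonneg hu, max_eq_right (a := -u - s) (by linarith)]
      try ring
  have hGeq : ∀ s : ℝ, 0 ≤ s →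
      (∑ i, max (x i - s) 0 = ∑ i, max (y i - s) 0 ∧
       ∑ i, max (-x i - s) 0 = ∑ i, max (-y i - s) 0) := by
    intro s hs
    have ex : ∑ i, max (x i - s) 0 + ∑ i, max (-x i - s) 0
        = ∑ i, max (|x i| - s) 0 := by
      rw [← Finset.sum_add_distrib]
      exact Finset.sum_congr rfl (fun i _ => hsplit s hs (x i))
    have ey : ∑ i, max (y i - s) 0 + ∑ i, max (-y i - s) 0
        = ∑ i, max (|y i| - s) 0 := by
      rw [← Finset.sum_add_distrib]
      exact Finset.sum_congr rfl (fun i _ => hsplit s hs (y i))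
    have := habsSum s
    have h1 := hF s
    have h2 := hG s
    constructor <;> linarith
  rcases le_or_gt 0 t with ht | ht
  · exact (hGeq t ht).1
  · have hGt := (hGeq (-t) (by linarith)).2
    have gx := G_identity x (-t)
    have gy := G_identity y (-t)
    simp only [neg_neg] at gx gy
    rw [gx, gy, h.2] at hGt
    linarith

end Aux

/-- If `x ≺ y` and `|x|↓ = |y|↓` then `x↓ = y↓`. -/
theorem sortDesc_eq_of_majorizes_abs_eq (d : ℕ) (x y : Fin d → ℝ) (h : Majorizes x y)
    (habs : sortDesc (fun i => |x i|) = sortDesc (fun i => |y i|)) :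
    sortDesc x = sortDesc y := by
  have hS : ∀ k : Fin d, ∑ i ∈ Finset.Iic k, sortDesc x i
      = ∑ i ∈ Finset.Iic k, sortDesc y i := by
    intro k
    refine le_antisymm (h.1 k) ?_
    have e := sum_Iic_eq x k (sortDesc x k)
      (fun i hik => sortDesc_antitone x hik)
      (fun i hki => sortDesc_antitone x hki.le)
    have l := sum_Iic_le y k (sortDesc x k)
    have key := F_eq_F x y h habs (sortDesc x k)
    linarith
  have hpt : ∀ n : ℕ, ∀ k : Fin d, k.val = n → sortDesc x k = sortDesc y k := by
    intro n
    induction n using Nat.strongRecOn with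
    | _ n ih =>
      intro k hk
      have hIio : ∑ i ∈ Finset.Iio k, sortDesc x i = ∑ i ∈ Finset.Iio k, sortDesc y i := by
        apply Finset.sum_congr rfl
        intro i hi
        have : i < k := Finset.mem_Iio.mp hi
        exact ih i.val (hk ▸ this) i rfl
      have hins : Finset.Iic k = insert k (Finset.Iio k) := (Finset.Iio_insert k).symm
      have hni : k ∉ Finset.Iio k := by simp
      have := hS k
      rw [hins, Finset.sum_insert hni, Finset.sum_insert hni, hIio] at this
      linarith
  funext k
  exact hpt k.val k rfl
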